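/- Let T be a finite tree (a finite connected acyclic graph), let r ≥ 1 be an integer, and let D_s, D_t be distance-r dominating sets of T with |D_s| = |D_t|. Then there exists a TJ-sequence in T from D_s to D_t. -/

import Mathlib

/-- `D` is a distance-`r` dominating set of `G`. -/
def IsDrDS {V : Type*} (G : SimpleGraph V) (r : ℕ) (D : Set V) : Prop :=
  ∀ v : V, ∃ u ∈ D, G.Reachable u v ∧ G.dist u v ≤ r

/-- A TJ-sequence of length `q` of distance-`r` dominating sets of `G`. -/
def IsTJSeq {V : Type*} (G : SimpleGraph V) (r q : ℕ)
    (Dseq : Fin (q + 1) → Finset V) : Prop :=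
  (∀ i, IsDrDS G r ↑(Dseq i)) ∧
  ∀ i : Fin q, ∃ x ∈ Dseq i.castSucc, ∃ y, y ∉ Dseq i.castSucc ∧
    (↑(Dseq i.succ) : Set V) = (↑(Dseq i.castSucc) \ {x}) ∪ {y}


/-! Root the tree at a vertex `ρ`. Greedily anchoring a deepest undominated vertex `v` at its
ancestor at distance `r` produces a fixed dominating set `A`, and every distance-`r` dominating set
can be transformed by token jumps into one containing `A`: the token dominating `v` jumps to the
anchor of `v`, which takes over everything that token was needed for. Two dominating sets of the
same size that contain `A` are joined by moving their other tokens one at a time, since `A` keeps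
every intermediate set dominating. As jumps are reversible, `D_s` and `D_t` are joined through
these two sets. -/

open Finset Relation

namespace SimpleGraph

variable {V : Type*} {G : SimpleGraph V}

theorem IsAcyclic.length_eq_dist (hG : G.IsAcyclic) {u v : V} {p : G.Walk u v}
    (hp : p.IsPath) : p.length = G.dist u v := by
  obtain ⟨q, hq, hql⟩ := p.reachable.exists_path_of_dist
  have hpq : p = q := congrArg Subtype.val ((hG.subsingleton_path u v).allEq ⟨p, hp⟩ ⟨q, hq⟩)
  rw [← hql, hpq]

theorem IsAcyclic.dist_add_dist_of_mem_support [DecidableEq V] (hG : G.IsAcyclic)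
    {u v a : V} {p : G.Walk u v} (hp : p.IsPath) (ha : a ∈ p.support) :
    G.dist u a + G.dist a v = G.dist u v := by
  rw [← hG.length_eq_dist (hp.takeUntil ha), ← hG.length_eq_dist (hp.dropUntil ha),
    ← hG.length_eq_dist hp, ← Walk.length_append, p.take_spec ha]

/-- The `w`–`u` and `w`–`v` paths together contain the `u`–`v` path, so `a` lies on one of
them. -/
theorem IsTree.dist_add_dist_eq_or_of_mem_support (hG : G.IsTree) {u v a : V}
    {p : G.Walk u v} (hp : p.IsPath) (ha : a ∈ p.support) (w : V) :
    G.dist w a + G.dist a u = G.dist w u ∨ G.dist w a + G.dist a v = G.dist w v := by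
  classical
  obtain ⟨q₁, hq₁, -⟩ := (hG.connected w u).exists_path_of_dist
  obtain ⟨q₂, hq₂, -⟩ := (hG.connected w v).exists_path_of_dist
  let W := q₁.reverse.append q₂
  have hpW : p = W.bypass :=
    congrArg Subtype.val
      ((hG.isAcyclic.subsingleton_path u v).allEq ⟨p, hp⟩ ⟨W.bypass, W.bypass_isPath⟩)
  have haW : a ∈ W.support := W.support_bypass_subset_support (hpW ▸ ha)
  rw [Walk.mem_support_append_iff, Walk.support_reverse, List.mem_reverse] at haW
  exact haW.imp (hG.isAcyclic.dist_add_dist_of_mem_support hq₁)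
    (hG.isAcyclic.dist_add_dist_of_mem_support hq₂)

/-- Rooting the tree at `ρ`, the anchor `a` of `v` is its ancestor at distance `r` (or the root, if
`v` is shallower). -/
theorem IsTree.exists_anchor (hG : G.IsTree) (r : ℕ) (ρ v : V) :
    ∃ a, G.dist a v ≤ r ∧
      ∀ w, G.dist ρ w ≤ G.dist ρ v → G.dist w v ≤ 2 * r → G.dist w a ≤ r := by
  by_cases hv : G.dist ρ v ≤ r
  · exact ⟨ρ, hv, fun w hw _ => dist_comm (G := G) ▸ hw.trans hv⟩
  obtain ⟨p, hp, hpl⟩ := (hG.connected ρ v).exists_path_of_dist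
  have ha := p.getVert_mem_support (G.dist ρ v - r)
  have hρa := hG.isAcyclic.length_eq_dist (hp.take (G.dist ρ v - r))
  have hav := hG.isAcyclic.length_eq_dist (hp.drop (G.dist ρ v - r))
  rw [Walk.take_length, hpl] at hρa
  rw [Walk.drop_length, hpl] at hav
  generalize p.getVert (G.dist ρ v - r) = a at ha hρa hav
  refine ⟨a, by omega, fun w hwρ hwv => ?_⟩
  have := hG.dist_add_dist_eq_or_of_mem_support hp ha w
  rw [dist_comm (u := a) (v := ρ), dist_comm (u := w) (v := ρ)] at this
  omega

end SimpleGraph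

section Reconfiguration

variable {V : Type*} {G : SimpleGraph V} {r : ℕ}

theorem IsDrDS.mono {D D' : Set V} (hD : IsDrDS G r D) (h : D ⊆ D') : IsDrDS G r D' :=
  fun v => (hD v).imp fun _ hu => ⟨h hu.1, hu.2⟩

theorem SimpleGraph.Connected.isDrDS_iff (hG : G.Connected) {D : Set V} :
    IsDrDS G r D ↔ ∀ v, ∃ u ∈ D, G.dist u v ≤ r :=
  forall_congr' fun v => exists_congr fun u => and_congr_right fun _ =>
    and_iff_right (hG u v)

variable [DecidableEq V]

def TJStep (G : SimpleGraph V) (r : ℕ) (S S' : Finset V) : Prop :=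
  IsDrDS G r S ∧ IsDrDS G r S' ∧ ∃ x ∈ S, ∃ y ∉ S, S' = insert y (S.erase x)

instance : Std.Symm (TJStep G r) where
  symm S S' := by
    rintro ⟨hS, hS', x, hx, y, hy, rfl⟩
    refine ⟨hS', hS, y, mem_insert_self _ _, x, by simp [ne_of_mem_of_not_mem hx hy], ?_⟩
    rw [erase_insert fun h => hy (mem_of_mem_erase h), insert_erase hx]

theorem TJStep.card_eq {S S' : Finset V} (h : TJStep G r S S') : S'.card = S.card := by
  obtain ⟨-, -, x, hx, y, hy, rfl⟩ := h
  rw [card_insert_of_notMem fun h => hy (mem_of_mem_erase h), card_erase_add_one hx]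

theorem card_eq_of_reflTransGen_tjStep {S S' : Finset V} (h : ReflTransGen (TJStep G r) S S') :
    S'.card = S.card := by
  induction h with
  | refl => rfl
  | tail _ hstep ih => rw [hstep.card_eq, ih]

theorem exists_isTJSeq_of_reflTransGen {S S' : Finset V} (h : ReflTransGen (TJStep G r) S S')
    (hS' : IsDrDS G r S') :
    ∃ (q : ℕ) (Dseq : Fin (q + 1) → Finset V),
      IsTJSeq G r q Dseq ∧ Dseq 0 = S ∧ Dseq (Fin.last q) = S' := by
  induction h using ReflTransGen.head_induction_on with
  | refl => exact ⟨0, fun _ => S', ⟨fun _ => hS', fun i => i.elim0⟩, rfl, rfl⟩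
  | @head S₀ S₁ hstep _ ih =>
    obtain ⟨q, Dseq, ⟨hdom, hjump⟩, h0, hlast⟩ := ih
    refine ⟨q + 1, Fin.cons S₀ Dseq, ⟨?_, ?_⟩, rfl, by simpa using hlast⟩
    · exact Fin.cases hstep.1 hdom
    · refine Fin.cases ?_ fun i => by simpa [← Fin.succ_castSucc] using hjump i
      obtain ⟨-, -, x, hx, y, hy, rfl⟩ := hstep
      refine ⟨x, hx, y, hy, ?_⟩
      simp [h0, Set.union_singleton]

theorem reflTransGen_tjStep_of_subset {A S S' : Finset V} (hA : IsDrDS G r A) (hAS : A ⊆ S)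
    (hAS' : A ⊆ S') (hcard : S.card = S'.card) : ReflTransGen (TJStep G r) S S' := by
  induction h : (S \ S').card generalizing S with
  | zero =>
    rw [card_eq_zero, sdiff_eq_empty_iff_subset] at h
    rw [eq_of_subset_of_card_le h hcard.ge]
  | succ n ih =>
    obtain ⟨x, hx⟩ : (S \ S').Nonempty := card_pos.1 (by omega)
    obtain ⟨y, hy⟩ : (S' \ S).Nonempty := card_pos.1 (by rw [← card_sdiff_comm hcard]; omega)
    rw [mem_sdiff] at hx hy
    have hAS₁ : A ⊆ insert y (S.erase x) := fun b hb =>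
      mem_insert_of_mem (mem_erase.2 ⟨ne_of_mem_of_not_mem hb fun h => hx.2 (hAS' h), hAS hb⟩)
    refine .head ⟨hA.mono (coe_subset.2 hAS), hA.mono (coe_subset.2 hAS₁), x, hx.1, y, hy.2, rfl⟩
      (ih hAS₁ ?_ ?_)
    · rw [card_insert_of_notMem fun h => hy.2 (mem_of_mem_erase h), card_erase_add_one hx.1, hcard]
    · rw [insert_sdiff_of_mem _ hy.1, erase_sdiff_comm, card_erase_of_mem (mem_sdiff.2 hx), h,
        Nat.add_sub_cancel]

/-- Replace the token dominating `v` by `a`. That token is not in `B`, and whatever it alone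
dominated is either outside `U`, hence dominated by `B`, or inside `U` within distance `2r` of `v`,
hence dominated by `a`. -/
theorem exists_reflTransGen_insert_anchor (hG : G.Connected) {U B S : Finset V} {v a : V}
    (hv : v ∈ U) (hanchor : ∀ w ∈ U, G.dist w v ≤ 2 * r → G.dist w a ≤ r)
    (hcov : ∀ w ∉ U, ∃ b ∈ B, G.dist b w ≤ r) (hfar : ∀ b ∈ B, ∀ z ∈ U, r < G.dist b z)
    (hBS : B ⊆ S) (hS : IsDrDS G r S) :
    ∃ S₁, ReflTransGen (TJStep G r) S S₁ ∧ insert a B ⊆ S₁ ∧ IsDrDS G r S₁ := by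
  by_cases haS : a ∈ S
  · exact ⟨S, .refl, insert_subset haS hBS, hS⟩
  obtain ⟨s, hsS, -, hsv⟩ := hS v
  have hBS₁ : B ⊆ S.erase s := fun b hb =>
    mem_erase.2 ⟨fun h => (hfar b hb v hv).not_ge (h ▸ hsv), hBS hb⟩
  have hS₁ : IsDrDS G r ↑(insert a (S.erase s)) := by
    refine hG.isDrDS_iff.2 fun w => ?_
    obtain ⟨u, huS, -, huw⟩ := hS w
    by_cases hus : u = s
    · subst hus
      by_cases hwU : w ∈ U
      · refine ⟨a, mem_insert_self _ _, SimpleGraph.dist_comm ▸ hanchor w hwU ?_⟩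
        calc G.dist w v ≤ G.dist w u + G.dist u v := hG.dist_triangle
          _ ≤ 2 * r := by rw [SimpleGraph.dist_comm]; omega
      · obtain ⟨b, hb, hbw⟩ := hcov w hwU
        exact ⟨b, mem_insert_of_mem (hBS₁ hb), hbw⟩
    · exact ⟨u, mem_insert_of_mem (mem_erase.2 ⟨hus, huS⟩), huw⟩
  exact ⟨_, .single ⟨hS, hS₁, s, hsS, a, haS, rfl⟩, insert_subset_insert a hBS₁, hS₁⟩

/-- `A` is built greedily: anchor a deepest vertex of `U`, then recurse on the vertices of `U` the
anchor misses. `B` stands for the anchors chosen before. -/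
theorem SimpleGraph.IsTree.exists_cover_forall_reflTransGen_superset (hG : G.IsTree) (r : ℕ)
    (ρ : V) (U : Finset V) :
    ∃ A : Finset V, (∀ z ∈ U, ∃ a ∈ A, G.dist a z ≤ r) ∧
      ∀ B S : Finset V, (∀ w ∉ U, ∃ b ∈ B, G.dist b w ≤ r) →
        (∀ b ∈ B, ∀ z ∈ U, r < G.dist b z) → B ⊆ S → IsDrDS G r S →
        ∃ S', ReflTransGen (TJStep G r) S S' ∧ B ∪ A ⊆ S' := by
  induction U using Finset.strongInduction with
  | H U ih =>
  rcases U.eq_empty_or_nonempty with rfl | hU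
  · exact ⟨∅, by simp, fun B S _ _ hBS _ => ⟨S, .refl, by simpa using hBS⟩⟩
  obtain ⟨v, hv, hvmax⟩ := U.exists_max_image (G.dist ρ) hU
  obtain ⟨a, hav, ha⟩ := hG.exists_anchor r ρ v
  obtain ⟨A, hAcov, hA⟩ := ih (U.filter (r < G.dist a ·)) (filter_ssubset.2 ⟨v, hv, by omega⟩)
  refine ⟨insert a A, fun z hz => ?_, fun B S hcov hfar hBS hS => ?_⟩
  · by_cases hza : r < G.dist a z
    · obtain ⟨a', ha', h⟩ := hAcov z (mem_filter.2 ⟨hz, hza⟩)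
      exact ⟨a', mem_insert_of_mem ha', h⟩
    · exact ⟨a, mem_insert_self _ _, not_lt.1 hza⟩
  obtain ⟨S₁, hSS₁, haBS₁, hS₁⟩ := exists_reflTransGen_insert_anchor hG.connected hv
    (fun w hw => ha w (hvmax w hw)) hcov hfar hBS hS
  have hcov' : ∀ w ∉ U.filter (r < G.dist a ·), ∃ b ∈ insert a B, G.dist b w ≤ r := by
    intro w hw
    by_cases hwU : w ∈ U
    · exact ⟨a, mem_insert_self _ _, by simpa [hwU] using hw⟩
    · obtain ⟨b, hb, h⟩ := hcov w hwU
      exact ⟨b, mem_insert_of_mem hb, h⟩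
  have hfar' : ∀ b ∈ insert a B, ∀ z ∈ U.filter (r < G.dist a ·), r < G.dist b z := by
    simp only [mem_insert, mem_filter]
    rintro b (rfl | hb) z hz
    exacts [hz.2, hfar b hb z hz.1]
  obtain ⟨S', hS₁S', hS'⟩ := hA (insert a B) S₁ hcov' hfar' haBS₁ hS₁
  exact ⟨S', hSS₁.trans hS₁S', by rwa [union_insert, ← insert_union]⟩

end Reconfiguration

theorem stmt14_general {V : Type*} [Fintype V] (T : SimpleGraph V) (htree : T.IsTree)
    (r : ℕ)
    (Ds Dt : Finset V) (hDs : IsDrDS T r ↑Ds) (hDt : IsDrDS T r ↑Dt)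
    (hcard : Ds.card = Dt.card) :
    ∃ (q : ℕ) (Dseq : Fin (q + 1) → Finset V),
      IsTJSeq T r q Dseq ∧ Dseq 0 = Ds ∧ Dseq (Fin.last q) = Dt := by
  classical
  obtain ⟨ρ⟩ := htree.connected.nonempty
  obtain ⟨A, hAcov, hA⟩ := htree.exists_cover_forall_reflTransGen_superset r ρ univ
  have hAdom : IsDrDS T r A := htree.connected.isDrDS_iff.2 fun v => hAcov v (mem_univ v)
  obtain ⟨Ss, hDsSs, hASs⟩ := hA ∅ Ds (by simp) (by simp) (empty_subset _) hDs
  obtain ⟨St, hDtSt, hASt⟩ := hA ∅ Dt (by simp) (by simp) (empty_subset _) hDt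
  rw [empty_union] at hASs hASt
  have hSsSt : ReflTransGen (TJStep T r) Ss St := reflTransGen_tjStep_of_subset hAdom hASs hASt
    (by rw [card_eq_of_reflTransGen_tjStep hDsSs, card_eq_of_reflTransGen_tjStep hDtSt, hcard])
  exact exists_isTJSeq_of_reflTransGen ((hDsSs.trans hSsSt).trans (symm hDtSt)) hDt

theorem stmt14 {V : Type*} [Fintype V] (T : SimpleGraph V) (htree : T.IsTree)
    (r : ℕ) (hr : 1 ≤ r)
    (Ds Dt : Finset V) (hDs : IsDrDS T r ↑Ds) (hDt : IsDrDS T r ↑Dt)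
    (hcard : Ds.card = Dt.card) :
    ∃ (q : ℕ) (Dseq : Fin (q + 1) → Finset V),
      IsTJSeq T r q Dseq ∧ Dseq 0 = Ds ∧ Dseq (Fin.last q) = Dt :=
  stmt14_general T htree r Ds Dt hDs hDt hcard
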